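/- For the forward process with N modalities, z_t | z_0, X ~ N(√(ᾱ_t) z_0 + Σ_{i=1}^N α̃_t^{(i)} E_i(x_i), (1-ᾱ_t)I), where each α̃_t^{(i)} satisfies α̃_0^{(i)} = 0 and α̃_t^{(i)} = √(α_t)(w_t^{(i)} + α̃_{t-1}^{(i)}); equivalently, the multi-encoder marginal follows from the single-encoder case applied to the aggregate E(X) = Σ_i (w_t^{(i)}/w_t^{(1)})·E_i(x_i) when the weight ratios w_t^{(i)}/w_t^{(1)} are constant in t. -/

import Mathlib

/-!
The transition is an affine map of the previous state plus independent Gaussian noise. Unrolling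
the recursion writes `z t` as a constant plus a combination of `ε 1, …, ε t`, so `z t` is
independent of `ε (t + 1)`. Coordinatewise, an affine image of a Gaussian is Gaussian and the sum
of independent Gaussians is the convolution of their laws, hence Gaussian with added means and
variances; the mean and variance then satisfy exactly the recursions defining `ᾱ` and `α̃`, since
`α (1 - ᾱ) + (1 - α) = 1 - ᾱ α`.
-/

open MeasureTheory ProbabilityTheory Finset
open scoped NNReal

/-- Isotropic Gaussian measure on `ℝ^d` with mean `m` and variance `v` in each coordinate. -/
noncomputable def gaussianVec (d : ℕ) (m : Fin d → ℝ) (v : ℝ≥0) :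
    Measure (Fin d → ℝ) :=
  Measure.pi fun i => gaussianReal (m i) v

lemma MeasureTheory.Measure.pi_conv_pi {ι M : Type*} [Fintype ι] [AddMonoid M]
    [MeasurableSpace M] [MeasurableAdd₂ M] (μ ν : ι → Measure M) [∀ i, IsFiniteMeasure (μ i)]
    [∀ i, IsFiniteMeasure (ν i)] :
    Measure.pi μ ∗ Measure.pi ν = Measure.pi fun i => μ i ∗ ν i := by
  rw [Measure.conv, ← (measurePreserving_arrowProdEquivProdArrow M M ι μ ν).map_eq,
    Measure.map_map measurable_add (MeasurableEquiv.measurable _)]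
  exact Measure.pi_map_pi fun i => measurable_add.aemeasurable

section GaussianVec

variable {d : ℕ}

lemma gaussianVec_zero_var (m : Fin d → ℝ) : gaussianVec d m 0 = Measure.dirac m := by
  simp [gaussianVec, gaussianReal_zero_var, ← Measure.infinitePi_eq_pi]

lemma gaussianVec_map_smul_add (m : Fin d → ℝ) (v : ℝ≥0) (a : ℝ) (c : Fin d → ℝ) :
    (gaussianVec d m v).map (fun x => a • x + c) = gaussianVec d (a • m + c) (‖a‖₊ ^ 2 * v) := by
  have h : ∀ i, (gaussianReal (m i) v).map (fun x => a * x + c i)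
      = gaussianReal (a * m i + c i) (‖a‖₊ ^ 2 * v) := fun i => by
    rw [show (fun x => a * x + c i) = (· + c i) ∘ (a * ·) from rfl,
      ← Measure.map_map (by fun_prop) (by fun_prop), gaussianReal_map_const_mul,
      gaussianReal_map_add_const]
    congr 2
    ext
    simp
  calc (gaussianVec d m v).map (fun x => a • x + c)
      = (Measure.pi fun i => gaussianReal (m i) v).map fun x i => a * x i + c i := rfl
    _ = Measure.pi fun i => (gaussianReal (m i) v).map fun x => a * x + c i :=
      Measure.pi_map_pi (f := fun i x => a * x + c i) fun i => by fun_prop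
    _ = gaussianVec d (a • m + c) (‖a‖₊ ^ 2 * v) := by simp_rw [h]; rfl

lemma gaussianVec_conv_gaussianVec (m₁ m₂ : Fin d → ℝ) (v₁ v₂ : ℝ≥0) :
    gaussianVec d m₁ v₁ ∗ gaussianVec d m₂ v₂ = gaussianVec d (m₁ + m₂) (v₁ + v₂) := by
  simp_rw [gaussianVec, Measure.pi_conv_pi, gaussianReal_conv_gaussianReal, Pi.add_apply]

variable {Ω : Type*} [MeasurableSpace Ω] {μ : Measure Ω} [IsFiniteMeasure μ] {X Y : Ω → Fin d → ℝ}

lemma gaussianVec_add_gaussianVec_of_indepFun {m₁ m₂ : Fin d → ℝ} {v₁ v₂ : ℝ≥0}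
    (hX : Measurable X) (hY : Measurable Y) (hXY : IndepFun X Y μ)
    (hXlaw : μ.map X = gaussianVec d m₁ v₁) (hYlaw : μ.map Y = gaussianVec d m₂ v₂) :
    μ.map (X + Y) = gaussianVec d (m₁ + m₂) (v₁ + v₂) := by
  rw [hXY.map_add_eq_map_conv_map hX hY, hXlaw, hYlaw, gaussianVec_conv_gaussianVec]

lemma map_diffusion_step_eq_gaussianVec {m k : Fin d → ℝ} {α β : ℝ}
    (hX : Measurable X) (hY : Measurable Y) (hXY : IndepFun X Y μ)
    (hα : α ∈ Set.Icc (0 : ℝ) 1) (hβ : β ≤ 1)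
    (hXlaw : μ.map X = gaussianVec d m (1 - β).toNNReal) (hYlaw : μ.map Y = gaussianVec d 0 1) :
    μ.map (fun ω => √α • X ω + k + √(1 - α) • Y ω)
      = gaussianVec d (√α • m + k) (1 - β * α).toNNReal := by
  have hsum : (fun ω => √α • X ω + k + √(1 - α) • Y ω)
      = (fun x => √α • x + k) ∘ X + (fun y => √(1 - α) • y + 0) ∘ Y := by
    ext1 ω
    simp
  rw [hsum, gaussianVec_add_gaussianVec_of_indepFun (by fun_prop) (by fun_prop)
    (hXY.comp (by fun_prop) (by fun_prop))
    (by rw [← Measure.map_map (by fun_prop) hX, hXlaw, gaussianVec_map_smul_add])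
    (by rw [← Measure.map_map (by fun_prop) hY, hYlaw, gaussianVec_map_smul_add])]
  congr 1
  · simp
  · rw [← NNReal.coe_inj]
    push_cast
    rw [Real.coe_toNNReal _ (sub_nonneg.2 hβ), Real.coe_toNNReal _ (by nlinarith [hα.1, hα.2]),
      Real.norm_eq_abs, Real.norm_eq_abs, sq_abs, sq_abs, Real.sq_sqrt hα.1,
      Real.sq_sqrt (sub_nonneg.2 hα.2)]
    ring

end GaussianVec

lemma ProbabilityTheory.iIndepFun.indepFun_sum_smul_of_notMem {Ω ι R E : Type*}
    [MeasurableSpace Ω] {μ : Measure Ω} [AddCommMonoid E] [SMul R E] [MeasurableSpace E]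
    [MeasurableAdd₂ E] [MeasurableConstSMul R E] {ε : ι → Ω → E} (hε : iIndepFun ε μ)
    (hmeas : ∀ i, Measurable (ε i)) (c : ι → R) {s : Finset ι} {j : ι} (hj : j ∉ s) :
    IndepFun (fun ω => ∑ i ∈ s, c i • ε i ω) (ε j) μ := by
  have hsum : (fun ω => ∑ i ∈ s, c i • ε i ω)
      = (fun x : s → E => ∑ i : s, c i • x i) ∘ fun ω (i : s) => ε i ω := by
    ext ω
    exact (sum_coe_sort s fun i => c i • ε i ω).symm
  have hj' : ε j = (fun x : ({j} : Finset ι) → E => x ⟨j, mem_singleton_self j⟩)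
      ∘ fun ω (i : ({j} : Finset ι)) => ε i ω := rfl
  rw [hsum, hj']
  exact (hε.indepFun_finset s {j} (disjoint_singleton_right.2 hj) hmeas).comp
    (Finset.measurable_sum _ fun i _ => (measurable_pi_apply i).const_smul (c i))
    (measurable_pi_apply _)

section AffineRecursion

variable {Ω R E : Type*} [Semiring R] [AddCommMonoid E] [Module R E] {z ε : ℕ → Ω → E} {z₀ : E}
  {a b : ℕ → R} {k : ℕ → E}

lemma exists_eq_add_sum_smul_of_affine_recursion (hz0 : z 0 = fun _ => z₀)
    (hrec : ∀ t ω, z (t + 1) ω = a t • z t ω + k t + b t • ε (t + 1) ω) (t : ℕ) :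
    ∃ (m : E) (c : ℕ → R), ∀ ω, z t ω = m + ∑ s ∈ Icc 1 t, c s • ε s ω := by
  induction t with
  | zero => exact ⟨z₀, 0, fun ω => by simp [hz0]⟩
  | succ n ih =>
    obtain ⟨m, c, hm⟩ := ih
    refine ⟨a n • m + k n, fun s => if s = n + 1 then b n else a n * c s, fun ω => ?_⟩
    have hsum : ∑ s ∈ Icc 1 n, (if s = n + 1 then b n else a n * c s) • ε s ω
        = a n • ∑ s ∈ Icc 1 n, c s • ε s ω := by
      rw [smul_sum]
      refine sum_congr rfl fun s hs => ?_
      rw [if_neg (by simp only [mem_Icc] at hs; omega), mul_smul]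
    rw [hrec, hm, sum_Icc_succ_top (by omega)]
    dsimp only
    rw [if_pos rfl, hsum, smul_add]
    abel

variable [MeasurableSpace Ω] [MeasurableSpace E] [MeasurableAdd₂ E] [MeasurableConstSMul R E]

lemma measurable_of_affine_recursion (hz0 : z 0 = fun _ => z₀)
    (hrec : ∀ t ω, z (t + 1) ω = a t • z t ω + k t + b t • ε (t + 1) ω)
    (hmeas : ∀ t, Measurable (ε t)) (t : ℕ) : Measurable (z t) := by
  induction t with
  | zero => simp [hz0]
  | succ n ih =>
    rw [funext (hrec n)]
    exact ((ih.const_smul _).add_const _).add ((hmeas _).const_smul _)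

lemma indepFun_of_affine_recursion {μ : Measure Ω} (hz0 : z 0 = fun _ => z₀)
    (hrec : ∀ t ω, z (t + 1) ω = a t • z t ω + k t + b t • ε (t + 1) ω)
    (hmeas : ∀ t, Measurable (ε t)) (hε : iIndepFun ε μ) (t : ℕ) :
    IndepFun (z t) (ε (t + 1)) μ := by
  obtain ⟨m, c, hm⟩ := exists_eq_add_sum_smul_of_affine_recursion hz0 hrec t
  rw [funext hm]
  exact (hε.indepFun_sum_smul_of_notMem hmeas c (by simp)).comp (measurable_const_add m)
    measurable_id

end AffineRecursion

/-- MT-Diffusion forward marginal with `N` modality encodings: under the transition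
`z t = √(α t) • (z (t-1) + Σ_i w t i • E i) + √(1 - α t) • ε t` with i.i.d. standard
Gaussian noises, `z t | z 0, X ~ N(√(ᾱ t) • z₀ + Σ_i α̃ t i • E i, (1 - ᾱ t) I)`, where
`ᾱ t = ∏_{i=1}^t α i`, `α̃ 0 i = 0` and `α̃ t i = √(α t) * (w t i + α̃ (t-1) i)`. -/
theorem mt_diffusion_forward_marginal_multimodal
    {Ω : Type*} [MeasurableSpace Ω] (μ : Measure Ω) [IsProbabilityMeasure μ]
    (d N : ℕ) (z ε : ℕ → Ω → (Fin d → ℝ)) (z₀ : Fin d → ℝ) (E : Fin N → (Fin d → ℝ))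
    (α αbar : ℕ → ℝ) (w αtilde : ℕ → Fin N → ℝ)
    (hα : ∀ t, α t ∈ Set.Ioc (0 : ℝ) 1)
    (hαbar : ∀ t, αbar t = ∏ i ∈ Finset.Icc 1 t, α i)
    (htilde0 : ∀ i, αtilde 0 i = 0)
    (htilde : ∀ t, 1 ≤ t → ∀ i, αtilde t i = Real.sqrt (α t) * (w t i + αtilde (t - 1) i))
    (hmeas : ∀ t, Measurable (ε t))
    (hiid : iIndepFun ε μ)
    (hlaw : ∀ t, μ.map (ε t) = gaussianVec d 0 1)
    (hz0 : z 0 = fun _ => z₀)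
    (hrec : ∀ t, 1 ≤ t → ∀ ω,
      z t ω = Real.sqrt (α t) • (z (t - 1) ω + ∑ i, w t i • E i)
        + Real.sqrt (1 - α t) • ε t ω) :
    ∀ t, μ.map (z t)
      = gaussianVec d (Real.sqrt (αbar t) • z₀ + ∑ i, αtilde t i • E i)
          (1 - αbar t).toNNReal := by
  set k : ℕ → Fin d → ℝ := fun t => √(α (t + 1)) • ∑ i, w (t + 1) i • E i
  have hrec' : ∀ t ω, z (t + 1) ω = √(α (t + 1)) • z t ω + k t + √(1 - α (t + 1)) • ε (t + 1) ω :=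
    fun t ω => by simp only [hrec (t + 1) le_add_self ω, Nat.add_sub_cancel, smul_add, k]
  have hαbar_succ (t : ℕ) : αbar (t + 1) = αbar t * α (t + 1) := by
    rw [hαbar, hαbar, prod_Icc_succ_top le_add_self]
  have hαbar_mem (t : ℕ) : αbar t ∈ Set.Ioc (0 : ℝ) 1 := by
    rw [hαbar]
    exact ⟨prod_pos fun i _ => (hα i).1, prod_le_one (fun i _ => (hα i).1.le) fun i _ => (hα i).2⟩
  intro t
  induction t with
  | zero => simp [hz0, hαbar, htilde0, gaussianVec_zero_var]
  | succ n ih =>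
    rw [funext (hrec' n), map_diffusion_step_eq_gaussianVec
      (measurable_of_affine_recursion hz0 hrec' hmeas n) (hmeas _)
      (indepFun_of_affine_recursion hz0 hrec' hmeas hiid n) (Set.Ioc_subset_Icc_self (hα _))
      (hαbar_mem n).2 ih (hlaw _), hαbar_succ, Real.sqrt_mul (hαbar_mem n).1.le]
    congr 1
    simp only [htilde (n + 1) le_add_self, Nat.add_sub_cancel, smul_add, mul_smul, mul_add,
      add_smul, smul_sum, sum_add_distrib, k]
    module
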